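/- arXiv:2510.04985 — 2 statements merged into one kernel-verified Lean document; each statement's English description precedes it below -/
import Mathlib

section
/- Let G be a simple DAG and let i → j be a super-covered edge of G. Then the graph G' obtained from G by replacing the edge i → j with j → i is again a directed acyclic graph. -/
variable {V : Type*}

/-- A directed graph (given by its non-loop edge relation) is simple if for
distinct vertices it contains at most one of the edges `i → j`, `j → i`
(this also forbids edges `i → i`, which in the paper are the tacitly ignored
self-loops). -/
def IsSimpleDigraph (G : V → V → Prop) : Prop :=
  ∀ i j, G i j → ¬ G j i

/-- A directed graph is acyclic if it has no directed cycle. -/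
def IsAcyclicDigraph (G : V → V → Prop) : Prop :=
  ∀ v, ¬ Relation.TransGen G v v

/-- A trek from `k` to `i`: a path `k ← ⋯ ← t → ⋯ → i` (either side possibly
empty), i.e. a common ancestor `t` with directed paths to `k` and to `i`. -/
def HasTrek (G : V → V → Prop) (k i : V) : Prop :=
  ∃ t, Relation.ReflTransGen G t k ∧ Relation.ReflTransGen G t i

/-- The edge `i → j` is super-covered: (1) `ch(i) = ch(j) ∪ {j}` and
`pa(i) ∪ {i} = pa(j)`; (2) every parent of `j` points to every child of `i`;
(3) every other vertex is a common neighbour of `i` and `j`, or has no trek to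
`i` and no trek to `j`. -/
def SuperCovered (G : V → V → Prop) (i j : V) : Prop :=
  G i j ∧
  (∀ l, G i l ↔ (G j l ∨ l = j)) ∧
  (∀ k, (G k i ∨ k = i) ↔ G k j) ∧
  (∀ k l, G k j → G i l → G k l) ∧
  (∀ k, k ≠ i → k ≠ j →
    ((G k i ∨ G i k) ∧ (G k j ∨ G j k)) ∨ (¬ HasTrek G k i ∧ ¬ HasTrek G k j))

/-- Flipping a super-covered edge `i → j` of a simple DAG yields again a DAG. -/
theorem stmt_12 (G : V → V → Prop) (hsimple : IsSimpleDigraph G)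
    (hdag : IsAcyclicDigraph G) (i j : V) (hsc : SuperCovered G i j) :
    IsAcyclicDigraph
      (fun a b => (G a b ∧ ¬(a = i ∧ b = j)) ∨ (a = j ∧ b = i)) := by
  classical
  obtain ⟨hij, hch, hpa, hkl, hother⟩ := hsc
  set H : V → V → Prop := fun a b => G a b ∧ ¬(a = i ∧ b = j) with hH
  have hHG : ∀ a b, H a b → G a b := fun a b h => h.1
  have hHrt : ∀ a b, Relation.ReflTransGen H a b → Relation.ReflTransGen G a b :=
    fun a b h => Relation.ReflTransGen.mono hHG a b h
  have hHacyc : ∀ v, ¬ Relation.TransGen H v v := fun v hv =>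
    hdag v (Relation.TransGen.mono hHG v v hv)
  have hne : i ≠ j := by
    rintro rfl
    exact hsimple i i hij hij
  -- key: no H-path from i to j
  have hkey : ¬ Relation.ReflTransGen H i j := by
    intro h
    rcases (Relation.reflTransGen_iff_eq_or_transGen.mp h) with h | h
    · exact hne h.symm
    · rcases Relation.TransGen.head'_iff.mp h with ⟨l, hil, hlj⟩
      have hlne : l ≠ j := by
        rintro rfl
        exact hil.2 ⟨rfl, rfl⟩
      have hjl : G j l := ((hch l).mp hil.1).resolve_right hlne
      exact hdag j (Relation.TransGen.head'_iff.mpr ⟨l, hjl, hHrt _ _ hlj⟩)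
  -- decomposition lemma
  have hL : ∀ a b, Relation.ReflTransGen
      (fun a b => (G a b ∧ ¬(a = i ∧ b = j)) ∨ (a = j ∧ b = i)) a b →
      Relation.ReflTransGen H a b ∨
      (Relation.ReflTransGen H a j ∧ Relation.ReflTransGen H i b) ∨
      Relation.ReflTransGen H i j := by
    intro a b h
    induction h using Relation.ReflTransGen.head_induction_on with
    | refl => exact Or.inl Relation.ReflTransGen.refl
    | head hstep _ ih =>
      rename_i x y _
      rcases hstep with hst | ⟨rfl, rfl⟩
      · rcases ih with h1 | ⟨h1, h2⟩ | h1
        · exact Or.inl (Relation.ReflTransGen.head hst h1)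
        · exact Or.inr (Or.inl ⟨Relation.ReflTransGen.head hst h1, h2⟩)
        · exact Or.inr (Or.inr h1)
      · rcases ih with h1 | ⟨h1, _⟩ | h1
        · exact Or.inr (Or.inl ⟨Relation.ReflTransGen.refl, h1⟩)
        · exact Or.inr (Or.inr h1)
        · exact Or.inr (Or.inr h1)
  intro v hv
  rcases Relation.TransGen.head'_iff.mp hv with ⟨w, hvw, hwv⟩
  rcases hvw with hst | ⟨hvj, hwi⟩
  · rcases hL w v hwv with h1 | ⟨h1, h2⟩ | h1
    · exact hHacyc v (Relation.TransGen.head'_iff.mpr ⟨w, hst, h1⟩)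
    · exact hkey (h2.trans (Relation.ReflTransGen.head hst h1))
    · exact hkey h1
  · rw [hvj, hwi] at hwv
    rcases hL i j hwv with h1 | ⟨_, h2⟩ | h1
    · exact hkey h1
    · exact hkey h2
    · exact hkey h1
end

section
/- Let G be a directed graph on n vertices with all self-loops in which vertex w is a sink receiving an edge from every other vertex (edges v → w for all v ≠ w, plus w → w), and let G₀ = G minus vertex w. Let Σ be a symmetric (on V ∪ {w}) matrix and Σ₀ its principal submatrix on V. With rows and columns of A_G(Σ) ordered so that rows (k,l) with k,l ∈ V come first, then rows (k,w), then (w,w), and columns similarly edges within V first, then v → w, then w → w, the matrix A_G(Σ) is block lower-triangular with top-left block A_{G₀}(Σ₀), and det A_G(Σ) = 2 det(Σ) · det A_{G₀}(Σ₀) when G₀ is complete. -/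
open Matrix

/-- The matrix `A_G(Σ)` of the vectorized Lyapunov system, with rows a given
finite set `R` of pairs `(k, l)` and columns a given finite set `E` of edges
`i → j` (as pairs `(i, j)`): the entry at row `(k, l)`, column `(i, j)` is `0`
if `j ∉ {k, l}`; `σ_{li}` if `j = k ≠ l`; `σ_{ki}` if `j = l ≠ k`; and
`2 σ_{ji}` if `j = k = l`. -/
def AG {V : Type*} [DecidableEq V] (S : Matrix V V ℝ) (R E : Finset (V × V)) :
    Matrix {r : V × V // r ∈ R} {e : V × V // e ∈ E} ℝ :=
  fun r c =>
    if c.1.2 = r.1.1 ∧ c.1.2 = r.1.2 then 2 * S c.1.2 c.1.1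
    else if c.1.2 = r.1.1 then S r.1.2 c.1.1
    else if c.1.2 = r.1.2 then S r.1.1 c.1.1
    else 0

/-- Let `w` be the last vertex of `Fin (n+1)`, a sink receiving an edge from
every vertex (including the self-loop `w → w`), on top of a complete simple
graph `G₀` (with self-loops) on the remaining `n` vertices.  With rows and
columns ordered compatibly — rows/columns not involving `w` first, and each
column `v → w` aligned with the row `(v, w)` — the matrix `A_G(Σ)` is block
lower-triangular with top-left block `A_{G₀}(Σ_V)`, and
`det A_G(Σ) = 2 det(Σ) · det A_{G₀}(Σ_V)`. -/
theorem stmt_17 {n : ℕ} (S : Matrix (Fin (n + 1)) (Fin (n + 1)) ℝ)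
    (hS : Sᵀ = S)
    (w : Fin (n + 1)) (hw : w = Fin.last n)
    (E₀ E R R₀ : Finset (Fin (n + 1) × Fin (n + 1)))
    (hE₀ : ∀ e ∈ E₀, e.1 ≠ w ∧ e.2 ≠ w)
    (hloop : ∀ i : Fin (n + 1), i ≠ w → (i, i) ∈ E₀)
    (hcomplete : ∀ i j : Fin (n + 1), i ≠ w → j ≠ w → i ≠ j →
      ((i, j) ∈ E₀ ∨ (j, i) ∈ E₀))
    (hsimple : ∀ i j : Fin (n + 1), (i, j) ∈ E₀ → i ≠ j → (j, i) ∉ E₀)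
    (hE : E = E₀ ∪ Finset.univ.image (fun v : Fin (n + 1) => (v, w)))
    (hR : R = Finset.univ.filter
      (fun p : Fin (n + 1) × Fin (n + 1) => p.1 ≤ p.2))
    (hR₀ : R₀ = R.filter (fun p => p.2 ≠ w))
    -- a compatible ordering (matching of rows and columns):
    (ec : {r : Fin (n + 1) × Fin (n + 1) // r ∈ R} ≃
          {e : Fin (n + 1) × Fin (n + 1) // e ∈ E})
    (hec1 : ∀ r, r.1.2 = w → (ec r).1 = r.1)
    (hec2 : ∀ r, r.1.2 ≠ w → (ec r).1.2 ≠ w)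
    (ec₀ : {r : Fin (n + 1) × Fin (n + 1) // r ∈ R₀} ≃
           {e : Fin (n + 1) × Fin (n + 1) // e ∈ E₀})
    (hec₀ : ∀ r : {r : Fin (n + 1) × Fin (n + 1) // r ∈ R₀},
      ((ec₀ r).1 : Fin (n + 1) × Fin (n + 1)) =
        (ec ⟨r.1, by
          have h := r.2; simp only [hR₀, Finset.mem_filter] at h; exact h.1⟩).1) :
    -- block lower-triangularity
    (∀ (r : {r : Fin (n + 1) × Fin (n + 1) // r ∈ R})
        (c : {e : Fin (n + 1) × Fin (n + 1) // e ∈ E}),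
        r.1.2 ≠ w → c.1.2 = w → AG S R E r c = 0) ∧
    -- the top-left block is `A_{G₀}(Σ_V)`
    (∀ (r : {r : Fin (n + 1) × Fin (n + 1) // r ∈ R₀})
        (c : {e : Fin (n + 1) × Fin (n + 1) // e ∈ E₀}),
        AG S R₀ E₀ r c =
          AG S R E
            ⟨r.1, by
              have h := r.2; simp only [hR₀, Finset.mem_filter] at h; exact h.1⟩
            ⟨c.1, by rw [hE]; exact Finset.mem_union_left _ c.2⟩) ∧
    -- the determinant factorization
    ((AG S R E).submatrix id ec).det =
      2 * S.det * ((AG S R₀ E₀).submatrix id ec₀).det := by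
  have hle : ∀ k : Fin (n + 1), k ≤ w := fun k => hw ▸ Fin.le_last k
  have hRmem : ∀ p : Fin (n + 1) × Fin (n + 1), p ∈ R ↔ p.1 ≤ p.2 := by
    intro p; rw [hR]; simp
  -- part 1
  have key1 : ∀ (r : {r : Fin (n + 1) × Fin (n + 1) // r ∈ R})
      (c : {e : Fin (n + 1) × Fin (n + 1) // e ∈ E}),
      r.1.2 ≠ w → c.1.2 = w → AG S R E r c = 0 := by
    intro r c hr hc
    have hr1 : r.1.1 ≠ w := by
      intro h
      exact hr (le_antisymm (hle _) (h ▸ (hRmem r.1).mp r.2))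
    have h1 : c.1.2 ≠ r.1.1 := fun h => hr1 (h.symm.trans hc)
    have h2 : c.1.2 ≠ r.1.2 := fun h => hr (h.symm.trans hc)
    simp [AG, h1, h2]
  refine ⟨key1, fun r c => rfl, ?_⟩
  -- part 3
  classical
  set M : Matrix {r : Fin (n + 1) × Fin (n + 1) // r ∈ R}
      {r : Fin (n + 1) × Fin (n + 1) // r ∈ R} ℝ :=
    (AG S R E).submatrix id ec with hM
  set b : {r : Fin (n + 1) × Fin (n + 1) // r ∈ R} → Fin 2 :=
    fun r => if r.1.2 = w then 0 else 1 with hb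
  have hbt : M.BlockTriangular b := by
    intro i j hij
    have hj : j.1.2 = w := by
      by_contra h
      simp only [hb, if_neg h] at hij
      exact absurd (lt_of_lt_of_le hij (by split <;> simp)) (lt_irrefl _)
    have hi : i.1.2 ≠ w := by
      intro h
      simp [hb, h, hj] at hij
    have hcw : (ec j).1.2 = w := by rw [hec1 j hj, hj]
    exact key1 i (ec j) hi hcw
  have hdet := hbt.det_fintype
  rw [Fin.prod_univ_two] at hdet
  -- block 0 : the Σ-with-doubled-last-row block
  have hmemR : ∀ k : Fin (n + 1), (k, w) ∈ R := fun k => (hRmem _).mpr (hle k)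
  let e0 : Fin (n + 1) ≃ {i : {r : Fin (n + 1) × Fin (n + 1) // r ∈ R} // b i = 0} :=
    { toFun := fun k => ⟨⟨(k, w), hmemR k⟩, by simp [hb]⟩
      invFun := fun i => i.1.1.1
      left_inv := fun k => rfl
      right_inv := by
        rintro ⟨⟨⟨k, l⟩, hmem⟩, hbi⟩
        have : l = w := by
          by_contra h
          simp [hb, h] at hbi
        subst this
        rfl }
  have hblock0 : (M.toSquareBlock b 0).det = 2 * S.det := by
    have h0 : (M.toSquareBlock b 0).submatrix e0 e0 =
        S.updateRow w ((2 : ℝ) • S w) := by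
      ext k k'
      have hecc : (ec ⟨(k', w), hmemR k'⟩).1 = (k', w) := hec1 _ rfl
      show AG S R E ⟨(k, w), hmemR k⟩ (ec ⟨(k', w), hmemR k'⟩) =
        S.updateRow w ((2 : ℝ) • S w) k k'
      simp only [AG, hecc]
      by_cases h : k = w
      · subst h; simp
      · simp [Matrix.updateRow_apply, h, Ne.symm h]
    rw [← Matrix.det_submatrix_equiv_self e0 (M.toSquareBlock b 0), h0,
      Matrix.det_updateRow_smul, Matrix.updateRow_eq_self]
  -- block 1 : the A_{G₀}(Σ_V) block
  have hR0mem : ∀ p : Fin (n + 1) × Fin (n + 1), p ∈ R₀ ↔ p ∈ R ∧ p.2 ≠ w := by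
    intro p; rw [hR₀]; simp
  let e1 : {r : Fin (n + 1) × Fin (n + 1) // r ∈ R₀} ≃
      {i : {r : Fin (n + 1) × Fin (n + 1) // r ∈ R} // b i = 1} :=
    { toFun := fun r => ⟨⟨r.1, ((hR0mem r.1).mp r.2).1⟩, by
        simp [hb, ((hR0mem r.1).mp r.2).2]⟩
      invFun := fun i => ⟨i.1.1, (hR0mem i.1.1).mpr ⟨i.1.2, by
        have := i.2
        by_contra h
        simp [hb, h] at this⟩⟩
      left_inv := fun r => rfl
      right_inv := fun i => rfl }
  have hblock1 : (M.toSquareBlock b 1).det = ((AG S R₀ E₀).submatrix id ec₀).det := by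
    rw [← Matrix.det_submatrix_equiv_self e1 (M.toSquareBlock b 1)]
    congr 1
    ext r r'
    show AG S R E ⟨r.1, ((hR0mem r.1).mp r.2).1⟩
        (ec ⟨r'.1, ((hR0mem r'.1).mp r'.2).1⟩) = AG S R₀ E₀ r (ec₀ r')
    simp only [AG, hec₀ r']
  rw [hdet, hblock0, hblock1]
end
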